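/- arXiv:math/0608193 — 3 statements merged into one kernel-verified Lean document; each statement's English description precedes it below -/
import Mathlib

section
/- Let N ≥ 1, and let φ be the real-linear endomorphism of the space 𝒜_N of N×N complex antihermitian matrices given by φ(X) = ∑_{l=1}^{r} A_l X B_l for fixed complex N×N matrices A_l, B_l (assuming φ maps 𝒜_N to 𝒜_N). Then the trace of φ as a real-linear endomorphism equals ∑_{l=1}^{r} Tr(A_l) Tr(B_l). -/
open Complex Matrix Finset
open scoped TensorProduct

/-!
Every complex matrix is uniquely `X + I • Y` with `X`, `Y` antihermitian, so the full matrix space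
is the complexification of `𝒜_N`, and `X ↦ ∑ l, A l * X * B l` on all matrices is the
complexification of `φ`. A complexified map has the same trace as the original one, and the
complex trace of `X ↦ A * X * B` is `Tr A * Tr B`, as one reads off on the matrix units.
-/

theorem IsBaseChange.trace_eq {R S M N : Type*} [CommRing R] [CommRing S] [Algebra R S]
    [AddCommGroup M] [Module R M] [Module.Free R M] [Module.Finite R M]
    [AddCommGroup N] [Module R N] [Module S N] [IsScalarTower R S N]
    {f : M →ₗ[R] N} (h : IsBaseChange S f) {φ : Module.End R M} {ψ : Module.End S N}
    (hψ : ∀ x, ψ (f x) = f (φ x)) :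
    LinearMap.trace S N ψ = algebraMap R S (LinearMap.trace R M φ) := by
  have : ψ = h.equiv.conj (φ.baseChange S) :=
    h.algHom_ext _ _ fun x => by
      simp [LinearEquiv.conj_apply, h.equiv_symm_apply, h.equiv_tmul, hψ]
  rw [this, LinearMap.trace_conj', LinearMap.trace_baseChange]

theorem Complex.isBaseChange_of_bijective_add_I_smul {W V : Type*} [AddCommGroup W] [Module ℝ W]
    [AddCommGroup V] [Module ℂ V] [Module ℝ V] [IsScalarTower ℝ ℂ V] (f : W →ₗ[ℝ] V)
    (hf : Function.Bijective fun p : W × W => f p.1 + I • f p.2) : IsBaseChange ℂ f := by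
  -- `z ⊗ w ↦ (z.re • w, z.im • w)`
  let e : ℂ ⊗[ℝ] W ≃ₗ[ℝ] W × W :=
    TensorProduct.congr equivRealProdLm (.refl ℝ W) ≪≫ₗ TensorProduct.prodLeft ℝ ℝ ℝ ℝ W ≪≫ₗ
      (TensorProduct.lid ℝ W).prodCongr (TensorProduct.lid ℝ W)
  have hlift : ⇑(f.liftBaseChange ℂ) = (fun p : W × W => f p.1 + I • f p.2) ∘ e := by
    ext x
    induction x with
    | zero => simp
    | tmul z w =>
      simp only [LinearMap.liftBaseChange_tmul, Function.comp_apply, LinearEquiv.trans_apply,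
        TensorProduct.congr_tmul, equivRealProdLm_apply, LinearEquiv.refl_apply,
        TensorProduct.prodLeft_tmul, LinearEquiv.prodCongr_apply, TensorProduct.lid_tmul,
        map_smul, e]
      rw [← algebraMap_smul ℂ z.re, ← algebraMap_smul ℂ z.im, smul_smul, ← add_smul, mul_comm]
      simp
    | add x y hx hy => simp_all [smul_add]; abel
  exact IsBaseChange.of_equiv (.ofBijective (f.liftBaseChange ℂ) (hlift ▸ hf.comp e.bijective))
    fun x => by rw [LinearEquiv.ofBijective_apply, LinearMap.liftBaseChange_tmul, one_smul]

theorem skewAdjoint.bijective_add_I_smul {A : Type*} [AddCommGroup A] [StarAddMonoid A]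
    [Module ℂ A] [StarModule ℂ A] [Module ℝ A] [IsScalarTower ℝ ℂ A] [StarModule ℝ A] :
    Function.Bijective fun p : skewAdjoint.submodule ℝ A × skewAdjoint.submodule ℝ A =>
      (p.1 : A) + I • (p.2 : A) := by
  have star_add_I_smul (x y : skewAdjoint.submodule ℝ A) :
      star ((x : A) + I • (y : A)) = -(x : A) + I • (y : A) := by
    rw [star_add, star_smul, skewAdjoint.mem_iff.1 x.2, skewAdjoint.mem_iff.1 y.2]
    simp
  refine ⟨fun ⟨x, y⟩ ⟨x', y'⟩ h => ?_, fun v => ?_⟩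
  · have h' := congrArg star h
    simp only [star_add_I_smul] at h h'
    have hx : (x : A) = x' := by
      have : (2 : ℂ) • (x : A) = (2 : ℂ) • (x' : A) := by
        linear_combination (norm := module) h - h'
      exact smul_right_injective A two_ne_zero this
    have hy : (y : A) = y' := by
      rw [hx, add_right_inj] at h
      exact smul_right_injective A I_ne_zero h
    exact Prod.ext (Subtype.ext hx) (Subtype.ext hy)
  · refine ⟨(⟨skewAdjointPart ℝ v, (skewAdjointPart ℝ v).2⟩,
      ⟨skewAdjointPart ℝ (-I • v), (skewAdjointPart ℝ (-I • v)).2⟩), ?_⟩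
    simp only [skewAdjointPart_apply_coe, star_smul]
    match_scalars <;> norm_num [Complex.ext_iff]

theorem Matrix.trace_mulLeft_comp_mulRight {R n : Type*} [CommRing R] [Fintype n]
    [DecidableEq n] (a b : Matrix n n R) :
    LinearMap.trace R _ (LinearMap.mulLeft R a ∘ₗ LinearMap.mulRight R b) = a.trace * b.trace := by
  rw [LinearMap.trace_eq_matrix_trace R (stdBasis R n n), trace, trace, trace,
    sum_mul_sum, ← sum_product']
  refine sum_congr rfl fun ij _ => ?_
  simp [LinearMap.toMatrix_apply, stdBasis, Pi.basis_repr, mul_apply, Pi.single_apply, ite_apply]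

theorem trace_endomorphism_skewAdjoint_general
    (N : ℕ) (r : ℕ) (A B : Fin r → Matrix (Fin N) (Fin N) ℂ)
    (φ : (skewAdjoint.submodule ℝ (Matrix (Fin N) (Fin N) ℂ)) →ₗ[ℝ]
      (skewAdjoint.submodule ℝ (Matrix (Fin N) (Fin N) ℂ)))
    (hφ : ∀ X : skewAdjoint.submodule ℝ (Matrix (Fin N) (Fin N) ℂ),
      (φ X : Matrix (Fin N) (Fin N) ℂ) = ∑ l : Fin r, A l * (X : Matrix (Fin N) (Fin N) ℂ) * B l) :
    ((LinearMap.trace ℝ _ φ : ℝ) : ℂ) = ∑ l : Fin r, (A l).trace * (B l).trace := by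
  let ψ : Module.End ℂ (Matrix (Fin N) (Fin N) ℂ) :=
    ∑ l, LinearMap.mulLeft ℂ (A l) ∘ₗ LinearMap.mulRight ℂ (B l)
  have hbc : IsBaseChange ℂ (skewAdjoint.submodule ℝ (Matrix (Fin N) (Fin N) ℂ)).subtype :=
    Complex.isBaseChange_of_bijective_add_I_smul _ skewAdjoint.bijective_add_I_smul
  have htrace := hbc.trace_eq (φ := φ) (ψ := ψ) fun X => by simp [ψ, hφ, mul_assoc]
  simp only [ψ, map_sum, trace_mulLeft_comp_mulRight] at htrace
  exact htrace.symm

/-- If `φ` is a real-linear endomorphism of the space of `N × N` complex antihermitian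
matrices given by `φ(X) = ∑ l, A l * X * B l`, then the trace of `φ` (as a real-linear
endomorphism) equals `∑ l, Tr(A l) * Tr(B l)`. -/
theorem trace_endomorphism_skewAdjoint
    (N : ℕ) (hN : 1 ≤ N) (r : ℕ) (A B : Fin r → Matrix (Fin N) (Fin N) ℂ)
    (φ : (skewAdjoint.submodule ℝ (Matrix (Fin N) (Fin N) ℂ)) →ₗ[ℝ]
      (skewAdjoint.submodule ℝ (Matrix (Fin N) (Fin N) ℂ)))
    (hφ : ∀ X : skewAdjoint.submodule ℝ (Matrix (Fin N) (Fin N) ℂ),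
      (φ X : Matrix (Fin N) (Fin N) ℂ) = ∑ l : Fin r, A l * (X : Matrix (Fin N) (Fin N) ℂ) * B l) :
    ((LinearMap.trace ℝ _ φ : ℝ) : ℂ) = ∑ l : Fin r, (A l).trace * (B l).trace :=
  trace_endomorphism_skewAdjoint_general N r A B φ hφ
end

section
/- Let A, B, n, D be positive constants with A > 4^{n+1} and B > 2nD(4A)^D, let C_k denote Catalan numbers, and set D_0 = 0, D_p = A^{p-1} C_{p-1} for p ≥ 1. Then for every p ≥ 1 and every multi-index k ∈ ℕ^n: 2 ∑_{0<q<p} ∑_{k'+k''=k} C_{k'} B^{|k'|} D_q C_{k''} B^{|k''|} D_{p−q} + nD C_k B^{|k|−1} (4A)^D D_p ≤ C_{k+1_j} B^{|k|+1} D_p for each j, where C_k = ∏_i C_{k_i}, |k| = ∑ k_i, and 1_j is the j-th coordinate vector. -/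
/-!
The `k'`-sum factorises over the coordinates, and in each coordinate it is the Catalan
recursion, so it equals `C_{k+1} B^{|k|}` with `C_{k+1} ≤ 4^n C_k`; the `q`-sum is the Catalan
recursion for `D`, i.e. `A ∑_{0<q<p} D_q D_{p-q} ≤ D_p`. Hence the left-hand side is at most
`C_k B^{|k|} D_p (2·4^n/A + nD(4A)^D/B)`, and the hypotheses on `A` and `B` make each of the
two rates less than `1/2`, while `B ≥ 1` and `C_k ≤ C_{k+1_j}`.
-/

open Finset

theorem catalan_pos (n : ℕ) : 0 < catalan n :=
  Nat.pos_of_mul_pos_left <| (succ_mul_catalan_eq_centralBinom n).symm ▸ n.centralBinom_pos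

theorem succ_succ_mul_catalan_succ (n : ℕ) :
    (n + 2) * catalan (n + 1) = 2 * (2 * n + 1) * catalan n := by
  have h := Nat.succ_mul_centralBinom_succ n
  rw [← succ_mul_catalan_eq_centralBinom, ← succ_mul_catalan_eq_centralBinom] at h
  have : (n + 1) * ((n + 2) * catalan (n + 1)) = (n + 1) * (2 * (2 * n + 1) * catalan n) := by
    linarith
  exact Nat.eq_of_mul_eq_mul_left n.succ_pos this

theorem catalan_le_catalan_succ (n : ℕ) : catalan n ≤ catalan (n + 1) := by
  have h := succ_succ_mul_catalan_succ n
  exact Nat.le_of_mul_le_mul_left (by nlinarith) (Nat.succ_pos (n + 1))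

theorem catalan_succ_le_four_mul (n : ℕ) : catalan (n + 1) ≤ 4 * catalan n := by
  have h := succ_succ_mul_catalan_succ n
  exact Nat.le_of_mul_le_mul_left (by nlinarith) (Nat.succ_pos (n + 1))

theorem catalan_mono : Monotone catalan :=
  monotone_nat_of_le_succ catalan_le_catalan_succ

theorem sum_range_succ_catalan_mul_catalan_sub (n : ℕ) :
    ∑ i ∈ range (n + 1), catalan i * catalan (n - i) = catalan (n + 1) := by
  rw [catalan_succ', Nat.sum_antidiagonal_eq_sum_range_succ (fun i j => catalan i * catalan j)]

section MultiIndex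

variable {ι : Type*} [Fintype ι]

theorem sum_Iic_prod_catalan_mul_catalan_tsub [DecidableEq ι] (k : ι → ℕ) :
    ∑ k' ∈ Iic k, ∏ i, catalan (k' i) * catalan (k i - k' i) = ∏ i, catalan (k i + 1) := by
  rw [show Iic k = Fintype.piFinset fun i => Iic (k i) from rfl,
    ← prod_univ_sum (fun i => Iic (k i)) fun i m => catalan m * catalan (k i - m)]
  simp only [← Nat.range_succ_eq_Iic, sum_range_succ_catalan_mul_catalan_sub]

theorem sum_Iic_catalan_pow_mul_catalan_pow [DecidableEq ι] {R : Type*} [CommSemiring R]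
    (k : ι → ℕ) (B : R) :
    ∑ k' ∈ Iic k, ((∏ i, (catalan (k' i) : R)) * B ^ (∑ i, k' i))
        * ((∏ i, (catalan (k i - k' i) : R)) * B ^ (∑ i, (k i - k' i)))
      = (∏ i, (catalan (k i + 1) : R)) * B ^ (∑ i, k i) := by
  have hpow : ∀ k' ∈ Iic k, B ^ (∑ i, k' i) * B ^ (∑ i, (k i - k' i)) = B ^ (∑ i, k i) := by
    intro k' hk'
    rw [← pow_add, ← sum_add_distrib]
    exact congrArg _ (sum_congr rfl fun i _ => Nat.add_sub_cancel' (mem_Iic.mp hk' i))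
  calc _ = ∑ k' ∈ Iic k, ((∏ i, catalan (k' i) * catalan (k i - k' i) : ℕ) : R)
          * B ^ (∑ i, k i) :=
        sum_congr rfl fun k' hk' => by
          rw [← hpow k' hk']; push_cast; rw [prod_mul_distrib]; ring
    _ = _ := by
        rw [← sum_mul, ← Nat.cast_sum, sum_Iic_prod_catalan_mul_catalan_tsub, Nat.cast_prod]

variable {R : Type*} [CommSemiring R] [PartialOrder R] [IsOrderedRing R]

theorem prod_catalan_succ_le (k : ι → ℕ) :
    ∏ i, (catalan (k i + 1) : R) ≤ 4 ^ Fintype.card ι * ∏ i, (catalan (k i) : R) :=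
  calc ∏ i, (catalan (k i + 1) : R) ≤ ∏ i, 4 * (catalan (k i) : R) :=
        prod_le_prod (fun _ _ => Nat.cast_nonneg _)
          fun i _ => by simpa using Nat.mono_cast (α := R) (catalan_succ_le_four_mul (k i))
    _ = 4 ^ Fintype.card ι * ∏ i, (catalan (k i) : R) := by
        rw [prod_mul_distrib, prod_const, card_univ]

end MultiIndex

theorem sum_sum_mul_mul_mul_mul {α β R : Type*} [CommSemiring R] (s : Finset α) (t : Finset β)
    (a b : β → R) (f g : α → R) :
    ∑ q ∈ s, ∑ x ∈ t, (a x * f q) * (b x * g q) = (∑ x ∈ t, a x * b x) * ∑ q ∈ s, f q * g q := by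
  rw [mul_sum]
  refine sum_congr rfl fun q _ => ?_
  rw [sum_mul]
  exact sum_congr rfl fun x _ => by ring

section CatalanWeights

variable {R : Type*} [CommSemiring R] {A : R} {Dseq : ℕ → R}

theorem mul_sum_Ico_mul_eq_of_catalan
    (hDseq : ∀ p : ℕ, 1 ≤ p → Dseq p = A ^ (p - 1) * (catalan (p - 1) : R)) (m : ℕ) :
    A * ∑ q ∈ Ico 1 (m + 2), Dseq q * Dseq (m + 2 - q) = Dseq (m + 2) := by
  have hterm : ∀ i ∈ range (m + 1), Dseq (1 + i) * Dseq (m + 2 - (1 + i))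
      = A ^ m * ((catalan i * catalan (m - i) : ℕ) : R) := by
    intro i hi
    have him : i ≤ m := Nat.lt_succ_iff.mp (mem_range.mp hi)
    rw [hDseq _ (by omega), hDseq _ (by omega), show 1 + i - 1 = i by omega,
      show m + 2 - (1 + i) - 1 = m - i by omega, ← Nat.sub_add_cancel him]
    push_cast; rw [Nat.add_sub_cancel, pow_add]; ring
  rw [sum_Ico_eq_sum_range, show m + 2 - 1 = m + 1 from rfl, sum_congr rfl hterm, ← mul_sum,
    ← Nat.cast_sum, sum_range_succ_catalan_mul_catalan_sub, hDseq _ (by omega),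
    show m + 2 - 1 = m + 1 from rfl, pow_succ, mul_comm (A ^ m) A, mul_assoc]

theorem pos_of_catalan [PartialOrder R] [IsStrictOrderedRing R] (hA : 0 < A)
    (hDseq : ∀ p : ℕ, 1 ≤ p → Dseq p = A ^ (p - 1) * (catalan (p - 1) : R)) {p : ℕ}
    (hp : 1 ≤ p) : 0 < Dseq p := by
  rw [hDseq p hp]
  exact mul_pos (pow_pos hA _) (Nat.cast_pos.mpr (catalan_pos _))

theorem sum_Ico_mul_nonneg_of_catalan [PartialOrder R] [IsStrictOrderedRing R] (hA : 0 < A)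
    (hDseq : ∀ p : ℕ, 1 ≤ p → Dseq p = A ^ (p - 1) * (catalan (p - 1) : R)) (p : ℕ) :
    0 ≤ ∑ q ∈ Ico 1 p, Dseq q * Dseq (p - q) :=
  sum_nonneg fun _ hq => have hq := mem_Ico.mp hq
    (mul_pos (pos_of_catalan hA hDseq hq.1) (pos_of_catalan hA hDseq (by omega))).le

theorem mul_sum_Ico_mul_le_of_catalan [PartialOrder R] [IsOrderedRing R]
    (hDseq : ∀ p : ℕ, 1 ≤ p → Dseq p = A ^ (p - 1) * (catalan (p - 1) : R)) {p : ℕ}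
    (hp : 1 ≤ p) : A * ∑ q ∈ Ico 1 p, Dseq q * Dseq (p - q) ≤ Dseq p := by
  obtain rfl | ⟨m, rfl⟩ : p = 1 ∨ ∃ m, p = m + 2 := by
    rcases p with _ | _ | m <;> simp_all
  · simp [hDseq 1 le_rfl]
  · exact (mul_sum_Ico_mul_eq_of_catalan hDseq m).le

end CatalanWeights

theorem two_mul_four_pow_div_add_div_lt_one {n D : ℕ} {A B : ℝ} (hA : (4 : ℝ) ^ (n + 1) < A)
    (hB : 2 * n * D * (4 * A) ^ D < B) :
    2 * 4 ^ n / A + n * D * (4 * A) ^ D / B < 1 := by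
  have hA0 : 0 < A := lt_trans (by positivity) hA
  have hB0 : 0 < B := lt_of_le_of_lt (by positivity) hB
  have h1 : 2 * 4 ^ n / A < 1 / 2 := by rw [div_lt_iff₀ hA0]; rw [pow_succ] at hA; linarith
  have h2 : n * D * (4 * A) ^ D / B < 1 / 2 := by rw [div_lt_iff₀ hB0]; linarith
  linarith

theorem one_le_of_two_mul_mul_pow_lt {n D : ℕ} {A B : ℝ} (hn : 0 < n) (hD : 0 < D)
    (hA : (4 : ℝ) ^ (n + 1) < A) (hB : 2 * n * D * (4 * A) ^ D < B) : 1 ≤ B := by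
  have h4A : 1 ≤ 4 * A := by linarith [one_le_pow₀ (n := n + 1) (by norm_num : (1 : ℝ) ≤ 4)]
  have : (1 : ℝ) ≤ n * D * (4 * A) ^ D := one_le_mul_of_one_le_of_one_le
    (one_le_mul_of_one_le_of_one_le (by exact_mod_cast hn) (by exact_mod_cast hD))
    (one_le_pow₀ h4A)
  linarith

theorem inductive_estimate_general
    (n D : ℕ) (hn : 0 < n) (hD : 0 < D) (A B : ℝ)
    (hA : (4 : ℝ) ^ (n + 1) < A) (hB : 2 * n * D * (4 * A) ^ D < B)
    (Dseq : ℕ → ℝ)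
    (hDseq : ∀ p : ℕ, 1 ≤ p → Dseq p = A ^ (p - 1) * (catalan (p - 1) : ℝ)) :
    ∀ (p : ℕ), 1 ≤ p → ∀ (k : Fin n → ℕ) (j : Fin n),
      2 * ∑ q ∈ Finset.Ico 1 p, ∑ k' ∈ Finset.Iic k,
          ((∏ i, (catalan (k' i) : ℝ)) * B ^ (∑ i, k' i) * Dseq q)
            * ((∏ i, (catalan (k i - k' i) : ℝ)) * B ^ (∑ i, (k i - k' i)) * Dseq (p - q))
        + (n : ℝ) * D * (∏ i, (catalan (k i) : ℝ)) * (B ^ (∑ i, k i) / B)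
            * (4 * A) ^ D * Dseq p
      ≤ (∏ i, (catalan (k i + if i = j then 1 else 0) : ℝ)) * B ^ ((∑ i, k i) + 1) * Dseq p := by
  intro p hp k j
  have hA0 : 0 < A := lt_trans (by positivity) hA
  have hB1 := one_le_of_two_mul_mul_pow_lt hn hD hA hB
  have hSq : ∑ q ∈ Ico 1 p, Dseq q * Dseq (p - q) ≤ Dseq p / A := by
    rw [le_div_iff₀ hA0, mul_comm]; exact mul_sum_Ico_mul_le_of_catalan hDseq hp
  have hT : ∏ i, (catalan (k i + 1) : ℝ) ≤ 4 ^ n * ∏ i, (catalan (k i) : ℝ) := by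
    simpa using prod_catalan_succ_le (R := ℝ) k
  have hSq0 := sum_Ico_mul_nonneg_of_catalan hA0 hDseq p
  have hDp := (pos_of_catalan hA0 hDseq hp).le
  rw [sum_sum_mul_mul_mul_mul, sum_Iic_catalan_pow_mul_catalan_pow]
  calc _ ≤ 2 * (4 ^ n * (∏ i, (catalan (k i) : ℝ)) * B ^ (∑ i, k i) * (Dseq p / A))
        + n * D * (∏ i, (catalan (k i) : ℝ)) * (B ^ (∑ i, k i) / B) * (4 * A) ^ D * Dseq p := by
        gcongr
    _ = (∏ i, (catalan (k i) : ℝ)) * B ^ (∑ i, k i) * Dseq p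
          * (2 * 4 ^ n / A + n * D * (4 * A) ^ D / B) := by ring
    _ ≤ (∏ i, (catalan (k i) : ℝ)) * B ^ (∑ i, k i) * Dseq p * B := by
        gcongr; linarith [two_mul_four_pow_div_add_div_lt_one hA hB]
    _ ≤ _ := by
        rw [pow_succ, mul_right_comm _ _ B, mul_assoc _ (B ^ _) B]
        gcongr
        exact catalan_mono (Nat.le_add_right _ _)

/-- The key inductive estimate for analyticity of the formal solution of the
Schwinger-Dyson equation. With Catalan numbers `C`, `D_0 = 0`, `D_p = A^(p-1) C_(p-1)`,
`C_k = ∏ C_(k i)`, `|k| = ∑ k i`, for `A > 4^(n+1)` and `B > 2nD(4A)^D`: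
`2 ∑_{0<q<p} ∑_{k'+k''=k} C_{k'} B^{|k'|} D_q C_{k''} B^{|k''|} D_{p-q}
  + nD C_k B^{|k|-1} (4A)^D D_p ≤ C_{k+1_j} B^{|k|+1} D_p`. -/
theorem inductive_estimate
    (n D : ℕ) (hn : 0 < n) (hD : 0 < D) (A B : ℝ)
    (hA : (4 : ℝ) ^ (n + 1) < A) (hB : 2 * n * D * (4 * A) ^ D < B)
    (Dseq : ℕ → ℝ) (hD0 : Dseq 0 = 0)
    (hDseq : ∀ p : ℕ, 1 ≤ p → Dseq p = A ^ (p - 1) * (catalan (p - 1) : ℝ)) :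
    ∀ (p : ℕ), 1 ≤ p → ∀ (k : Fin n → ℕ) (j : Fin n),
      2 * ∑ q ∈ Finset.Ico 1 p, ∑ k' ∈ Finset.Iic k,
          ((∏ i, (catalan (k' i) : ℝ)) * B ^ (∑ i, k' i) * Dseq q)
            * ((∏ i, (catalan (k i - k' i) : ℝ)) * B ^ (∑ i, (k i - k' i)) * Dseq (p - q))
        + (n : ℝ) * D * (∏ i, (catalan (k i) : ℝ)) * (B ^ (∑ i, k i) / B)
            * (4 * A) ^ D * Dseq p
      ≤ (∏ i, (catalan (k i + if i = j then 1 else 0) : ℝ)) * B ^ ((∑ i, k i) + 1) * Dseq p :=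
  inductive_estimate_general n D hn hD A B hA hB Dseq hDseq
end

section
/- Let (𝒜, φ) be a noncommutative probability space, a_1, ..., a_n elements of a unital subalgebra 𝒜₀, and u a Haar unitary free from 𝒜₀ (i.e., φ(u^k) = 0 for all k ∈ ℤ \ {0} and the algebra generated by u, u* is free from 𝒜₀). Then for every polynomial P in u, u*, a_1, ..., a_n and for the free-difference quotient ∂ with respect to u (defined by ∂u = u ⊗ 1, ∂u* = −1 ⊗ u*, ∂a_i = 0, Leibniz rule), one has φ ⊗ φ(∂P) = 0. -/
/-!
By the Leibniz rule, `(φ ⊗ φ)(∂(x₁ ⋯ xₘ))` is the sum of `φ(x₁ ⋯ xⱼ) φ(xⱼ₊₁ ⋯ xₘ)` over the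
`j` with `xⱼ = u`, minus the sum of `φ(x₁ ⋯ xⱼ₋₁) φ(xⱼ ⋯ xₘ)` over the `j` with `xⱼ = u*`.
This sum makes sense for every word in `u`, `u*` and elements of `A₀`; it does not change when a
factor `u u*` or `u* u` is cancelled or two adjacent letters of `A₀` are multiplied, and it is
affine in each letter `b` of `A₀`, which may therefore be replaced by `b - φ(b)`. This reduces
the claim to reduced words whose letters from `A₀` are centred. There, the prefix ending at an
occurrence of `u`, and the suffix starting at an occurrence of `u*`, is an alternating product of
nonzero powers of `u` or `u*` and centred elements of `A₀`: its state vanishes by the Haar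
property and freeness, and so does every term of the sum.
-/

theorem FreeAlgebra.basisFreeMonoid_apply (R X : Type*) [CommSemiring R] (w : FreeMonoid X) :
    FreeAlgebra.basisFreeMonoid R X w = (w.toList.map (FreeAlgebra.ι R)).prod := by
  simp [FreeAlgebra.basisFreeMonoid, FreeAlgebra.equivMonoidAlgebraFreeMonoid,
    FreeMonoid.lift_apply]

open List Sum TensorProduct

namespace HaarUnitary

variable {R A : Type*} [CommRing R] [Ring A] [Algebra R A]

def AreFree (φ : A →ₗ[R] R) (C D : Subalgebra R A) : Prop :=
  ∀ L : List (A × Bool), L ≠ [] →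
    (∀ p ∈ L, (if p.2 then p.1 ∈ C else p.1 ∈ D) ∧ φ p.1 = 0) →
    L.IsChain (fun p q => p.2 ≠ q.2) → φ (L.map Prod.fst).prod = 0

section Words

variable (φ : A →ₗ[R] R) (u us : A) {B : Subalgebra R A}

def letter : Bool ⊕ B → A := Sum.elim (fun c => if c then u else us) (↑)

@[simp] lemma letter_inl (c : Bool) : letter u us (inl c : Bool ⊕ B) = if c then u else us := rfl

@[simp] lemma letter_inr (b : B) : letter u us (inr b) = b := rfl

def eval (w : List (Bool ⊕ B)) : A := (w.map (letter u us)).prod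

@[simp] lemma eval_nil : eval u us ([] : List (Bool ⊕ B)) = 1 := rfl

@[simp] lemma eval_cons (x : Bool ⊕ B) (w : List (Bool ⊕ B)) :
    eval u us (x :: w) = letter u us x * eval u us w := prod_cons

lemma eval_flatten (G : List (List (Bool ⊕ B))) :
    eval u us G.flatten = (G.map (eval u us)).prod := by
  simp only [eval, map_flatten, prod_flatten, List.map_map]
  rfl

@[simp] lemma eval_append (w₁ w₂ : List (Bool ⊕ B)) :
    eval u us (w₁ ++ w₂) = eval u us w₁ * eval u us w₂ := by
  simp [eval]

/-- The image of `∂u = u ⊗ 1`, `∂u* = -1 ⊗ u*`, `∂b = 0` under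
`ξ ↦ (φ ⊗ φ)((p ⊗ 1) ξ (1 ⊗ q))`. -/
def letterTerm : Bool ⊕ B → A →ₗ[R] A →ₗ[R] R
  | inl true => (LinearMap.mul R R).compl₁₂ (φ ∘ₗ LinearMap.mulRight R u) φ
  | inl false => -(LinearMap.mul R R).compl₁₂ φ (φ ∘ₗ LinearMap.mulLeft R us)
  | inr _ => 0

@[simp] lemma letterTerm_inl_true (p q : A) :
    letterTerm φ u us (inl true : Bool ⊕ B) p q = φ (p * u) * φ q := rfl

@[simp] lemma letterTerm_inl_false (p q : A) :
    letterTerm φ u us (inl false : Bool ⊕ B) p q = -(φ p * φ (us * q)) := rfl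

@[simp] lemma letterTerm_inr (b : B) : letterTerm φ u us (inr b) = 0 := rfl

/-- `sdForm w p q = (φ ⊗ φ)((p ⊗ 1) (∂w) (1 ⊗ q))`, expanded by the Leibniz rule. -/
def sdForm : List (Bool ⊕ B) → A →ₗ[R] A →ₗ[R] R
  | [] => 0
  | x :: w => (letterTerm φ u us x).compl₂ (LinearMap.mulLeft R (eval u us w)) +
      (sdForm w).comp (LinearMap.mulRight R (letter u us x))

@[simp] lemma sdForm_nil : sdForm φ u us ([] : List (Bool ⊕ B)) = 0 := rfl

@[simp] lemma sdForm_cons_apply (x : Bool ⊕ B) (w : List (Bool ⊕ B)) (p q : A) :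
    sdForm φ u us (x :: w) p q =
      letterTerm φ u us x p (eval u us w * q) + sdForm φ u us w (p * letter u us x) q := rfl

lemma sdForm_append_apply (w₁ w₂ : List (Bool ⊕ B)) (p q : A) :
    sdForm φ u us (w₁ ++ w₂) p q =
      sdForm φ u us w₁ p (eval u us w₂ * q) + sdForm φ u us w₂ (p * eval u us w₁) q := by
  induction w₁ generalizing p with
  | nil => simp
  | cons x w₁ ih => simp [ih, mul_assoc, add_assoc]

lemma sdForm_append_congr {w w' : List (Bool ⊕ B)} (heval : eval u us w = eval u us w')
    (hform : sdForm φ u us w = sdForm φ u us w') (w₁ w₂ : List (Bool ⊕ B)) :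
    sdForm φ u us (w₁ ++ w ++ w₂) = sdForm φ u us (w₁ ++ w' ++ w₂) := by
  ext p q
  simp only [sdForm_append_apply, eval_append, heval, hform]

lemma sdForm_append_cancel (huus : u * us = 1) (husu : us * u = 1) (c : Bool)
    (w₁ w₂ : List (Bool ⊕ B)) :
    sdForm φ u us (w₁ ++ inl c :: inl (!c) :: w₂) = sdForm φ u us (w₁ ++ w₂) := by
  have heval : eval u us [(inl c : Bool ⊕ B), inl (!c)] = eval u us ([] : List (Bool ⊕ B)) := by
    cases c <;> simp [huus, husu]
  have hform :
      sdForm φ u us [(inl c : Bool ⊕ B), inl (!c)] = sdForm φ u us ([] : List (Bool ⊕ B)) := by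
    have hus : ∀ x, us * (u * x) = x := fun x => by rw [← mul_assoc, husu, one_mul]
    ext p q
    cases c <;> simp [mul_assoc, huus, husu, hus]
  simpa using sdForm_append_congr φ u us heval hform w₁ w₂

lemma sdForm_append_merge (b b' : B) (w₁ w₂ : List (Bool ⊕ B)) :
    sdForm φ u us (w₁ ++ inr b :: inr b' :: w₂) = sdForm φ u us (w₁ ++ inr (b * b') :: w₂) := by
  have heval : eval u us [(inr b : Bool ⊕ B), inr b'] = eval u us [inr (b * b')] := by simp
  have hform : sdForm φ u us [(inr b : Bool ⊕ B), inr b'] = sdForm φ u us [inr (b * b')] := by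
    ext p q
    simp
  simpa using sdForm_append_congr φ u us heval hform w₁ w₂

lemma sdForm_append_center (b : B) (w₁ w₂ : List (Bool ⊕ B)) (p q : A) :
    sdForm φ u us (w₁ ++ inr b :: w₂) p q =
      sdForm φ u us (w₁ ++ inr (b - φ b • 1) :: w₂) p q + φ b * sdForm φ u us (w₁ ++ w₂) p q := by
  simp only [sdForm_append_apply, sdForm_cons_apply, eval_cons, letter_inr, letterTerm_inr,
    LinearMap.zero_apply, zero_add, AddSubgroupClass.coe_sub, SetLike.val_smul,
    OneMemClass.coe_one, sub_mul, mul_sub, one_mul, mul_one, Algebra.smul_mul_assoc,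
    Algebra.mul_smul_comm, map_sub, map_smul, smul_eq_mul, LinearMap.sub_apply,
    LinearMap.smul_apply]
  ring

def ReducedAdj : Bool ⊕ B → Bool ⊕ B → Prop
  | inl c, inl c' => c = c'
  | inr _, inr _ => False
  | _, _ => True

def IsCentered : Bool ⊕ B → Prop
  | inl _ => True
  | inr b => φ b = 0

lemma eq_replicate_or_eq_singleton_of_isChain : ∀ {g : List (Bool ⊕ B)}, g ≠ [] →
    g.IsChain (fun x y => x.isLeft = y.isLeft) → g.IsChain ReducedAdj →
    (∃ c k, g = replicate (k + 1) (inl c)) ∨ ∃ b, g = [inr b]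
  | [inl c], _, _, _ => .inl ⟨c, 0, rfl⟩
  | [inr b], _, _, _ => .inr ⟨b, rfl⟩
  | x :: y :: t, _, hkind, hred => by
    obtain ⟨c, k, hyt⟩ | ⟨b, hyt⟩ :=
      eq_replicate_or_eq_singleton_of_isChain (cons_ne_nil y t) hkind.tail hred.tail
    · rw [replicate_succ, cons.injEq] at hyt
      obtain ⟨rfl, rfl⟩ := hyt
      rcases x with c' | b
      · obtain rfl : c' = c := hred.rel
        exact .inl ⟨c', k + 1, rfl⟩
      · simpa using hkind.rel
    · rw [cons.injEq] at hyt
      obtain ⟨rfl, rfl⟩ := hyt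
      rcases x with c | b'
      · simpa using hkind.rel
      · exact hred.rel.elim

lemma eval_replicate_mem_adjoin_and_eq_zero
    (hmom : ∀ k : ℕ, 1 ≤ k → φ (u ^ k) = 0 ∧ φ (us ^ k) = 0) (c : Bool) (k : ℕ) :
    eval u us (replicate (k + 1) (inl c : Bool ⊕ B)) ∈ Algebra.adjoin R {u, us} ∧
      φ (eval u us (replicate (k + 1) (inl c : Bool ⊕ B))) = 0 := by
  simp only [eval, map_replicate, prod_replicate, letter_inl]
  refine ⟨Subalgebra.pow_mem _ ?_ _, ?_⟩
  · cases c <;> exact Algebra.subset_adjoin (by simp)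
  · cases c
    exacts [(hmom _ k.succ_pos).2, (hmom _ k.succ_pos).1]

theorem map_eval_eq_zero_of_reduced (hfree : AreFree φ (Algebra.adjoin R {u, us}) B)
    (hmom : ∀ k : ℕ, 1 ≤ k → φ (u ^ k) = 0 ∧ φ (us ^ k) = 0) {w : List (Bool ⊕ B)}
    (hw : w ≠ []) (hred : w.IsChain ReducedAdj) (hcen : ∀ x ∈ w, IsCentered φ x) :
    φ (eval u us w) = 0 := by
  -- maximal runs of unitary letters, and single letters of `B`
  set G := w.splitBy fun x y => x.isLeft == y.isLeft
  have hinfix : ∀ g ∈ G, g <:+: w := fun g hg => flatten_splitBy _ w ▸ infix_of_mem_flatten hg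
  have hshape : ∀ g ∈ G, (∃ c k, g = replicate (k + 1) (inl c)) ∨ ∃ b, g = [inr b] :=
    fun g hg => eq_replicate_or_eq_singleton_of_isChain (ne_nil_of_mem_splitBy hg)
      ((isChain_of_mem_splitBy hg).imp (by simp)) (hred.infix (hinfix g hg))
  have hkind : ∀ g ∈ G, ∀ x ∈ g, x.isLeft = g.any Sum.isLeft := by
    intro g hg x hx
    rcases hshape g hg with ⟨c, k, rfl⟩ | ⟨b, rfl⟩
    · obtain rfl := eq_of_mem_replicate hx
      simp
    · obtain rfl := mem_singleton.1 hx
      rfl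
  have key := hfree (G.map fun g => (eval u us g, g.any Sum.isLeft))
    (by simpa only [ne_eq, map_eq_nil_iff] using splitBy_ne_nil.2 hw) ?valid ?alternating
  · rwa [List.map_map, Function.comp_def, ← eval_flatten, flatten_splitBy] at key
  case valid =>
    simp only [mem_map, forall_exists_index, and_imp, forall_apply_eq_imp_iff₂]
    intro g hg
    rcases hshape g hg with ⟨c, k, rfl⟩ | ⟨b, rfl⟩
    · rw [if_pos (by simp)]
      exact eval_replicate_mem_adjoin_and_eq_zero φ u us hmom c k
    · have hb : φ b = 0 := hcen (inr b) ((hinfix _ hg).subset (mem_singleton_self _))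
      simpa [eval] using hb
  case alternating =>
    rw [isChain_map]
    refine (isChain_getLast_head_splitBy _ w).imp_of_mem_imp ?_
    rintro g g' hg hg' ⟨hne, hne', hboundary⟩
    rw [← hkind g hg _ (getLast_mem hne), ← hkind g' hg' _ (head_mem hne')]
    simpa using hboundary

theorem sdForm_eval_one_eq_zero_of_reduced (hfree : AreFree φ (Algebra.adjoin R {u, us}) B)
    (hmom : ∀ k : ℕ, 1 ≤ k → φ (u ^ k) = 0 ∧ φ (us ^ k) = 0) (w₁ w : List (Bool ⊕ B))
    (hred : (w₁ ++ w).IsChain ReducedAdj) (hcen : ∀ x ∈ w₁ ++ w, IsCentered φ x) :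
    sdForm φ u us w (eval u us w₁) 1 = 0 := by
  induction w generalizing w₁ with
  | nil => simp
  | cons x w ih =>
    have hassoc : w₁ ++ x :: w = (w₁ ++ [x]) ++ w := by simp
    have hrest := ih (w₁ ++ [x]) (hassoc ▸ hred) (hassoc ▸ hcen)
    rw [eval_append, eval_cons, eval_nil, mul_one] at hrest
    rw [sdForm_cons_apply, hrest, add_zero]
    rcases x with (_ | _) | b
    · have hsuffix : φ (us * eval u us w) = 0 := by
        simpa using map_eval_eq_zero_of_reduced φ u us hfree hmom (cons_ne_nil _ w)
          hred.right_of_append (fun y hy => hcen y (mem_append_right _ hy))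
      simp [hsuffix]
    · have hprefix : φ (eval u us w₁ * u) = 0 := by
        simpa using map_eval_eq_zero_of_reduced φ u us hfree hmom
          (append_ne_nil_of_right_ne_nil w₁ (cons_ne_nil _ []))
          (hassoc ▸ hred).left_of_append
          (fun y hy => hcen y (hassoc ▸ mem_append_left _ hy))
      simp [hprefix]
    · simp

open Classical in
theorem sdForm_eq_zero (hφ1 : φ 1 = 1) (huus : u * us = 1) (husu : us * u = 1)
    (hmom : ∀ k : ℕ, 1 ≤ k → φ (u ^ k) = 0 ∧ φ (us ^ k) = 0)
    (hfree : AreFree φ (Algebra.adjoin R {u, us}) B) (w : List (Bool ⊕ B)) :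
    sdForm φ u us w 1 1 = 0 := by
  by_cases hred : w.IsChain ReducedAdj
  · by_cases hcen : ∀ x ∈ w, IsCentered φ x
    · simpa using sdForm_eval_one_eq_zero_of_reduced φ u us hfree hmom [] w hred hcen
    push Not at hcen
    obtain ⟨_ | b, hx, hb⟩ := hcen
    · exact (hb trivial).elim
    obtain ⟨w₁, w₂, rfl⟩ := append_of_mem hx
    have hb₀ : IsCentered φ (inr (b - φ b • 1) : Bool ⊕ B) := by simp [IsCentered, hφ1]
    rw [sdForm_append_center, sdForm_eq_zero hφ1 huus husu hmom hfree (w₁ ++ inr _ :: w₂),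
      sdForm_eq_zero hφ1 huus husu hmom hfree (w₁ ++ w₂), mul_zero, add_zero]
  rw [isChain_iff_forall_rel_of_append_cons_cons] at hred
  push Not at hred
  obtain ⟨x, y, w₁, w₂, rfl, hxy⟩ := hred
  rcases x with c | b <;> rcases y with c' | b'
  · obtain rfl : c' = !c := by cases c <;> cases c' <;> simp_all [ReducedAdj]
    rw [sdForm_append_cancel φ u us huus husu]
    exact sdForm_eq_zero hφ1 huus husu hmom hfree (w₁ ++ w₂)
  · exact (hxy trivial).elim
  · exact (hxy trivial).elim
  · rw [sdForm_append_merge]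
    exact sdForm_eq_zero hφ1 huus husu hmom hfree _
-- Merging two letters of `B` may produce an uncentred letter, hence the weight of the length;
-- centring lowers the count by `hb₀`.
termination_by 2 * w.length + w.countP (fun x => ¬ IsCentered φ x)
decreasing_by
  all_goals
    subst_vars
    simp only [length_append, length_cons, countP_append, countP_cons]
    split_ifs <;> first | omega | simp_all

end Words

section FreeAlgebra

variable {F : Type*} [Ring F] [Algebra R F] (φ : A →ₗ[R] R) (ψ : F →ₐ[R] A)

def pairing (p : A) : F ⊗[R] F →ₗ[R] R :=
  TensorProduct.lift ((LinearMap.mul R R).compl₁₂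
    (φ ∘ₗ LinearMap.mulLeft R p ∘ₗ ψ.toLinearMap) (φ ∘ₗ ψ.toLinearMap))

@[simp] lemma pairing_tmul (p : A) (P Q : F) :
    pairing φ ψ p (P ⊗ₜ Q) = φ (p * ψ P) * φ (ψ Q) := by
  simp [pairing]

lemma pairing_one : pairing φ ψ 1 = TensorProduct.lift ((LinearMap.mul R R).compl₁₂
    (φ ∘ₗ ψ.toLinearMap) (φ ∘ₗ ψ.toLinearMap)) := by
  simp [pairing, LinearMap.mulLeft_one]

lemma pairing_tmul_one_mul (p : A) (P : F) (ξ : F ⊗[R] F) :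
    pairing φ ψ p ((P ⊗ₜ 1) * ξ) = pairing φ ψ (p * ψ P) ξ := by
  induction ξ using TensorProduct.induction_on with
  | zero => simp
  | tmul Q Q' => simp [mul_assoc]
  | add ξ ξ' h h' => simp only [mul_add, map_add, h, h']

end FreeAlgebra

section DiffQuotient

variable {I : Type*}

structure IsUnitaryDiffQuotient (D : FreeAlgebra R (Bool ⊕ I) →ₗ[R]
    FreeAlgebra R (Bool ⊕ I) ⊗[R] FreeAlgebra R (Bool ⊕ I)) : Prop where
  map_u : D (FreeAlgebra.ι R (inl true)) = FreeAlgebra.ι R (inl true) ⊗ₜ 1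
  map_us : D (FreeAlgebra.ι R (inl false)) = -(1 ⊗ₜ FreeAlgebra.ι R (inl false))
  map_inr (i : I) : D (FreeAlgebra.ι R (inr i)) = 0
  leibniz (P Q : FreeAlgebra R (Bool ⊕ I)) : D (P * Q) = D P * (1 ⊗ₜ Q) + (P ⊗ₜ 1) * D Q

variable {D : FreeAlgebra R (Bool ⊕ I) →ₗ[R]
    FreeAlgebra R (Bool ⊕ I) ⊗[R] FreeAlgebra R (Bool ⊕ I)}

lemma IsUnitaryDiffQuotient.map_one (hD : IsUnitaryDiffQuotient D) : D 1 = 0 := by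
  have h := hD.leibniz 1 1
  rw [mul_one, ← Algebra.TensorProduct.one_def, mul_one, one_mul] at h
  exact left_eq_add.mp h

variable (φ : A →ₗ[R] R) (u us : A) {B : Subalgebra R A} (a : I → B)

lemma lift_apply_monomial (M : List (Bool ⊕ I)) :
    FreeAlgebra.lift R (letter u us ∘ Sum.map id a) (M.map (FreeAlgebra.ι R)).prod =
      eval u us (M.map (Sum.map id a)) := by
  simp [map_list_prod, eval, List.map_map]

theorem pairing_apply_monomial (hD : IsUnitaryDiffQuotient D) (M : List (Bool ⊕ I)) (p : A) :
    pairing φ (FreeAlgebra.lift R (letter u us ∘ Sum.map id a)) p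
        (D (M.map (FreeAlgebra.ι R)).prod) = sdForm φ u us (M.map (Sum.map id a)) p 1 := by
  induction M generalizing p with
  | nil => simp [hD.map_one]
  | cons x M ih =>
    rw [map_cons, prod_cons, hD.leibniz, map_add, pairing_tmul_one_mul, ih, map_cons,
      sdForm_cons_apply, mul_one, FreeAlgebra.lift_ι_apply, Function.comp_apply]
    congr 1
    rcases x with (_ | _) | i
    · rw [hD.map_us, ← neg_tmul, Algebra.TensorProduct.tmul_mul_tmul]
      simp [lift_apply_monomial]
    · simp [hD.map_u, lift_apply_monomial]
    · simp [hD.map_inr]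

end DiffQuotient

end HaarUnitary

open HaarUnitary
open scoped TensorProduct

/-- Schwinger-Dyson equation for a Haar unitary: let `(A, φ)` be a noncommutative
probability space, `a i ∈ A₀` elements of a unital subalgebra, and `u` a Haar unitary
(with inverse `us`) free from `A₀`.  Then for every polynomial `P` in the free algebra
on the letters `u, u*, a i` and for any linear map `∂` satisfying the defining
properties of the free difference quotient with respect to `u`
(`∂u = u ⊗ 1`, `∂u* = −1 ⊗ u*`, `∂ a_i = 0`, Leibniz rule), one has
`(φ ⊗ φ)(Dq P) = 0` after evaluation. -/
theorem haar_unitary_schwinger_dyson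
    {A : Type*} [Ring A] [Algebra ℂ A]
    (φ : A →ₗ[ℂ] ℂ) (hφ1 : φ 1 = 1)
    (A₀ : Subalgebra ℂ A) (n : ℕ) (a : Fin n → A) (ha : ∀ i, a i ∈ A₀)
    (u us : A) (huus : u * us = 1) (husu : us * u = 1)
    (hmom : ∀ k : ℕ, 1 ≤ k → φ (u ^ k) = 0 ∧ φ (us ^ k) = 0)
    (hfree : ∀ L : List (A × Bool), L ≠ [] →
      (∀ p ∈ L, (if p.2 then p.1 ∈ Algebra.adjoin ℂ ({u, us} : Set A) else p.1 ∈ A₀)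
        ∧ φ p.1 = 0) →
      L.Chain' (fun p q => p.2 ≠ q.2) → φ (L.map Prod.fst).prod = 0)
    (Dq : FreeAlgebra ℂ (Bool ⊕ Fin n) →ₗ[ℂ]
      (FreeAlgebra ℂ (Bool ⊕ Fin n) ⊗[ℂ] FreeAlgebra ℂ (Bool ⊕ Fin n)))
    (hDqu : Dq (FreeAlgebra.ι ℂ (Sum.inl true))
      = FreeAlgebra.ι ℂ (Sum.inl true) ⊗ₜ[ℂ] 1)
    (hDqus : Dq (FreeAlgebra.ι ℂ (Sum.inl false))
      = -((1 : FreeAlgebra ℂ (Bool ⊕ Fin n)) ⊗ₜ[ℂ] FreeAlgebra.ι ℂ (Sum.inl false)))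
    (hDqa : ∀ i : Fin n, Dq (FreeAlgebra.ι ℂ (Sum.inr i)) = 0)
    (hLeib : ∀ P Q : FreeAlgebra ℂ (Bool ⊕ Fin n),
      Dq (P * Q) = Dq P * (1 ⊗ₜ[ℂ] Q) + (P ⊗ₜ[ℂ] 1) * Dq Q) :
    ∀ P : FreeAlgebra ℂ (Bool ⊕ Fin n),
      TensorProduct.lift
        ((LinearMap.mul ℂ ℂ).compl₁₂
          (φ ∘ₗ (FreeAlgebra.lift ℂ
            (fun x => Sum.elim (fun b => if b then u else us) a x)).toLinearMap)
          (φ ∘ₗ (FreeAlgebra.lift ℂ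
            (fun x => Sum.elim (fun b => if b then u else us) a x)).toLinearMap))
        (Dq P) = 0 := by
  intro P
  let a₀ : Fin n → A₀ := fun i => ⟨a i, ha i⟩
  have hletters : (fun x => Sum.elim (fun b => if b then u else us) a x) =
      letter u us ∘ Sum.map id a₀ := by
    funext x
    cases x <;> rfl
  have hD : IsUnitaryDiffQuotient Dq := ⟨hDqu, hDqus, hDqa, hLeib⟩
  have hzero : pairing φ (FreeAlgebra.lift ℂ (letter u us ∘ Sum.map id a₀)) 1 ∘ₗ Dq = 0 :=
    (FreeAlgebra.basisFreeMonoid ℂ _).ext fun w => by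
      rw [LinearMap.comp_apply, FreeAlgebra.basisFreeMonoid_apply ℂ,
        pairing_apply_monomial φ u us a₀ hD, sdForm_eq_zero φ u us hφ1 huus husu hmom hfree]
      rfl
  rw [hletters, ← pairing_one]
  exact LinearMap.congr_fun hzero P
end
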